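/- Let R₀^! be as above and fix an integer N ≥ 4. Define F₂-linear maps φ₁, φ₂ on monomials by: φ₁(a) = a if wt₊(a) ≤ N and φ₁(a) = 0 otherwise; φ₂(a,b) = (ab)'·θ if ab ≠ 0, wt₊(ab) > N, wt₊(a) ≤ N, and wt₊(b) ≤ N, and φ₂(a,b) = 0 otherwise, where (ab)' denotes the monomial obtained from ab by deleting its last two non-θ letters (preserving wt_θ). Then for all monomials a, b of R₀^!: φ₁(ab) + φ₁(a)φ₁(b) + μ₁(φ₂(a,b)) + φ₂(μ₁(a), b) + φ₂(a, μ₁(b)) = 0, i.e., (φ₁, φ₂, 0, 0, …) satisfies the two-input A∞-morphism relation from the completed algebra to R₀^!. -/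

import Mathlib

/-!
Put `wordHomotopy l = (l)'θ` if the monomial `l` is nonzero and `0` otherwise. Then
`φ₂(a, b) = wordHomotopy (ab)` when `wt₊(a), wt₊(b) ≤ N < wt₊(ab)` and `φ₂(a, b) = 0` otherwise,
while `φ₁(ab) + φ₁(a)φ₁(b)` is `ab` in that range and `0` otherwise. As `μ₁` preserves `wt₊` and
is a derivation, the relation reduces to the identity `μ₁ h(l) + h(μ₁ l) = l` for single words `l`
with `wt₊(l) ≥ 3`, where `h = wordHomotopy`: in high weight `h` is a contracting homotopy.

Nonzero monomials are `θ^ε` times an alternating word in `w, z`. For `θ`-free `l = cxy`,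
`μ₁((l)'θ) = cwz + czw`, and one summand has a square while the other is `l`. For `l = pθq`,
exactly one of `pwzq`, `pzwq` is alternating; its pruning is the alternating word with the same
first letter and length as `pq`, that is `pq` itself, so `h(μ₁ l) = θ·pq = l`. With two `θ`s
everything vanishes.
-/

noncomputable section

/-- Relations defining `R₀^! = F₂⟨w,z,θ⟩/(w², z², wθ+θw, zθ+θz, θ²)`.
Letters: `0 = w`, `1 = z`, `2 = θ`. -/
inductive relK : FreeAlgebra (ZMod 2) (Fin 3) → FreeAlgebra (ZMod 2) (Fin 3) → Prop
  | wsq : relK (FreeAlgebra.ι (ZMod 2) 0 * FreeAlgebra.ι (ZMod 2) 0) 0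
  | zsq : relK (FreeAlgebra.ι (ZMod 2) 1 * FreeAlgebra.ι (ZMod 2) 1) 0
  | wth : relK (FreeAlgebra.ι (ZMod 2) 0 * FreeAlgebra.ι (ZMod 2) 2)
      (FreeAlgebra.ι (ZMod 2) 2 * FreeAlgebra.ι (ZMod 2) 0)
  | zth : relK (FreeAlgebra.ι (ZMod 2) 1 * FreeAlgebra.ι (ZMod 2) 2)
      (FreeAlgebra.ι (ZMod 2) 2 * FreeAlgebra.ι (ZMod 2) 1)
  | thsq : relK (FreeAlgebra.ι (ZMod 2) 2 * FreeAlgebra.ι (ZMod 2) 2) 0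

/-- The algebra `R₀^!`. -/
abbrev R0dual := RingQuot relK

/-- The free algebra `F₂⟨w,z,θ⟩`. -/
abbrev FA := FreeAlgebra (ZMod 2) (Fin 3)

/-- The generators `w, z, θ` of `R₀^!`. -/
def gen (i : Fin 3) : R0dual := RingQuot.mkRingHom relK (FreeAlgebra.ι (ZMod 2) i)

/-- The monomial of `R₀^!` associated to a word in the letters `w, z, θ`. -/
def mono (l : List (Fin 3)) : R0dual := (l.map gen).prod

/-- The word monomial in the free algebra. -/
def wordFA (l : List (Fin 3)) : FA := (l.map (FreeAlgebra.ι (ZMod 2))).prod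

/-- The weight `wt₊ = wt + wt_θ` of a word. -/
def wtp (l : List (Fin 3)) : ℕ := l.length + l.count 2

/-- Delete the first letter different from `θ` (= `2`). -/
def dropFirstNonTheta : List (Fin 3) → List (Fin 3)
  | [] => []
  | a :: t => if a = 2 then a :: dropFirstNonTheta t else t

/-- `(ab)'`: delete the last two non-`θ` letters of a word (preserving `wt_θ`). -/
def prune (l : List (Fin 3)) : List (Fin 3) :=
  (dropFirstNonTheta (dropFirstNonTheta l.reverse)).reverse

/-- `φ₁` on monomials: the identity in weights `≤ N` and zero otherwise. -/
def phi1w (N : ℕ) (l : List (Fin 3)) : R0dual :=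
  if wtp l ≤ N then mono l else 0

open Classical in
/-- `φ₂` on pairs of monomials: `(ab)'·θ` when `ab ≠ 0`, `wt₊(ab) > N`,
`wt₊(a) ≤ N` and `wt₊(b) ≤ N`; zero otherwise. -/
def phi2w (N : ℕ) (a b : List (Fin 3)) : R0dual :=
  if mono (a ++ b) ≠ 0 ∧ N < wtp (a ++ b) ∧ wtp a ≤ N ∧ wtp b ≤ N then
    mono (prune (a ++ b) ++ [2])
  else 0

lemma mono_cons (x : Fin 3) (l : List (Fin 3)) : mono (x :: l) = gen x * mono l := rfl

lemma mono_append (u v : List (Fin 3)) : mono (u ++ v) = mono u * mono v := by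
  simp [mono]

lemma wtp_append (u v : List (Fin 3)) : wtp (u ++ v) = wtp u + wtp v := by
  simp only [wtp, List.length_append, List.count_append]
  omega

lemma gen_mul_self (x : Fin 3) : gen x * gen x = 0 := by
  have hrel : relK (FreeAlgebra.ι (ZMod 2) x * FreeAlgebra.ι (ZMod 2) x) 0 := by
    fin_cases x
    exacts [relK.wsq, relK.zsq, relK.thsq]
  simpa [gen] using RingQuot.mkRingHom_rel hrel

lemma commute_gen_two (x : Fin 3) : Commute (gen x) (gen 2) := by
  fin_cases x
  · exact (by simpa [gen] using RingQuot.mkRingHom_rel relK.wth : gen 0 * gen 2 = gen 2 * gen 0)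
  · exact (by simpa [gen] using RingQuot.mkRingHom_rel relK.zth : gen 1 * gen 2 = gen 2 * gen 1)
  · exact Commute.refl _

lemma mono_append_cons_two (p q : List (Fin 3)) : mono (p ++ 2 :: q) = gen 2 * mono (p ++ q) := by
  have hcomm : Commute (mono p) (gen 2) :=
    Commute.list_prod_left _ _ (List.forall_mem_map.2 fun x _ => commute_gen_two x)
  rw [mono_append, mono_cons, ← mul_assoc, hcomm.eq, mul_assoc, ← mono_append]

lemma mono_append_cons_cons_self (u v : List (Fin 3)) (x : Fin 3) :
    mono (u ++ x :: x :: v) = 0 := by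
  rw [mono_append, mono_cons, mono_cons, ← mul_assoc (gen x), gen_mul_self, zero_mul, mul_zero]

lemma mono_eq_zero_of_not_isChain {l : List (Fin 3)} (h : ¬ l.IsChain (· ≠ ·)) : mono l = 0 := by
  rw [List.isChain_iff_forall_rel_of_append_cons_cons] at h
  push Not at h
  obtain ⟨x, _, u, v, rfl, rfl⟩ := h
  exact mono_append_cons_cons_self u v x

lemma mono_eq_zero_of_two_le_count {l : List (Fin 3)} (h : 2 ≤ l.count 2) : mono l = 0 := by
  obtain ⟨p, r, rfl⟩ := List.append_of_mem (List.count_pos_iff.mp (by omega : 0 < l.count 2))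
  have hr : 0 < (p ++ r).count 2 := by
    simp only [List.count_append, List.count_cons_self] at h ⊢
    omega
  obtain ⟨u, v, huv⟩ := List.append_of_mem (List.count_pos_iff.mp hr)
  rw [mono_append_cons_two, huv, mono_append_cons_two, ← mul_assoc, gen_mul_self, zero_mul]

/-- `w, z ↦ E₀₁, E₁₀` and `θ ↦ ε • 1` define a representation of `R₀^!` in which a nonempty
alternating word in `w, z` acts by an elementary matrix; hence such words are nonzero in `R₀^!`. -/
def modelGen : Fin 3 → Matrix (Fin 2) (Fin 2) (DualNumber (ZMod 2))
  | 0 => Matrix.single 0 1 1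
  | 1 => Matrix.single 1 0 1
  | 2 => (DualNumber.eps : DualNumber (ZMod 2)) • 1

def modelRep : R0dual →ₐ[ZMod 2] Matrix (Fin 2) (Fin 2) (DualNumber (ZMod 2)) :=
  RingQuot.liftAlgHom (ZMod 2) ⟨FreeAlgebra.lift _ modelGen, fun x y h => by
    cases h <;> simp [modelGen, smul_smul]⟩

lemma modelRep_gen (x : Fin 3) : modelRep (gen x) = modelGen x := by
  rw [gen, ← RingQuot.mkAlgHom_coe (ZMod 2) relK, AlgHom.coe_toRingHom, modelRep,
    RingQuot.liftAlgHom_mkAlgHom_apply, FreeAlgebra.lift_ι_apply]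

lemma exists_modelRep_mono_cons_eq_single {x : Fin 3} {t : List (Fin 3)} (hθ : 2 ∉ x :: t)
    (hc : (x :: t).IsChain (· ≠ ·)) :
    ∃ j, modelRep (mono (x :: t)) = Matrix.single (if x = 0 then 0 else 1) j 1 := by
  induction t generalizing x with
  | nil =>
    fin_cases x
    · exact ⟨1, by simp [mono, modelRep_gen, modelGen]⟩
    · exact ⟨0, by simp [mono, modelRep_gen, modelGen]⟩
    · simp at hθ
  | cons y s ih =>
    obtain ⟨hxy, hc'⟩ := List.isChain_cons_cons.mp hc
    obtain ⟨j, hj⟩ := ih (fun h => hθ (List.mem_cons_of_mem x h)) hc'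
    refine ⟨j, ?_⟩
    rw [mono_cons, map_mul, hj, modelRep_gen]
    fin_cases x <;> fin_cases y <;> simp_all [modelGen]

lemma mono_ne_zero_of_isChain {l : List (Fin 3)} (hθ : 2 ∉ l) (hc : l.IsChain (· ≠ ·)) :
    mono l ≠ 0 := by
  intro h
  cases l with
  | nil => simpa [mono] using congrArg modelRep h
  | cons x t =>
    obtain ⟨j, hj⟩ := exists_modelRep_mono_cons_eq_single hθ hc
    rw [h, map_zero] at hj
    simpa using congrFun (congrFun hj (if x = 0 then 0 else 1)) j

lemma eq_of_isChain_ne_of_head?_eq {l m : List (Fin 3)} (hlθ : 2 ∉ l) (hmθ : 2 ∉ m)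
    (hl : l.IsChain (· ≠ ·)) (hm : m.IsChain (· ≠ ·)) (hlen : l.length = m.length)
    (hhead : l.head? = m.head?) : l = m := by
  induction l generalizing m with
  | nil => exact (List.length_eq_zero_iff.mp hlen.symm).symm
  | cons x l' ih =>
    obtain _ | ⟨y, m'⟩ := m
    · simp at hlen
    obtain rfl : x = y := by simpa using hhead
    refine congrArg _ (ih (fun h => hlθ (.tail x h)) (fun h => hmθ (.tail x h)) hl.tail hm.tail
      (by simpa using hlen) ?_)
    obtain _ | ⟨u, l''⟩ := l' <;> obtain _ | ⟨v, m''⟩ := m'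
    · rfl
    · simp at hlen
    · simp at hlen
    have := (List.isChain_cons_cons.mp hl).1
    have := (List.isChain_cons_cons.mp hm).1
    simp only [List.mem_cons, not_or] at hlθ hmθ
    exact congrArg some (by omega)

lemma count_dropFirstNonTheta (l : List (Fin 3)) :
    (dropFirstNonTheta l).count 2 = l.count 2 := by
  induction l with
  | nil => rfl
  | cons a t ih => by_cases ha : a = 2 <;> simp_all [dropFirstNonTheta]

lemma count_prune (l : List (Fin 3)) : (prune l).count 2 = l.count 2 := by
  simp [prune, count_dropFirstNonTheta]

lemma dropFirstNonTheta_of_two_not_mem {l : List (Fin 3)} (h : 2 ∉ l) :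
    dropFirstNonTheta l = l.tail := by
  cases l with
  | nil => rfl
  | cons a t => simp [dropFirstNonTheta, show a ≠ 2 by grind]

lemma prune_of_two_not_mem {l : List (Fin 3)} (h : 2 ∉ l) : prune l = l.dropLast.dropLast := by
  have h' : 2 ∉ l.dropLast := fun h' => h (List.dropLast_subset l h')
  rw [prune, dropFirstNonTheta_of_two_not_mem (l := l.reverse) (by simpa using h),
    List.tail_reverse, dropFirstNonTheta_of_two_not_mem (by simpa using h'), List.tail_reverse,
    List.reverse_reverse]

def derivWords : List (Fin 3) → List (List (Fin 3))
  | [] => []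
  | x :: t => (if x = 2 then [0 :: 1 :: t, 1 :: 0 :: t] else []) ++ (derivWords t).map (x :: ·)

lemma derivWords_append (a b : List (Fin 3)) :
    derivWords (a ++ b) = (derivWords a).map (· ++ b) ++ (derivWords b).map (a ++ ·) := by
  induction a with
  | nil => simp [derivWords]
  | cons x t ih => by_cases hx : x = 2 <;> simp [derivWords, ih, hx, Function.comp_def]

lemma derivWords_eq_nil {l : List (Fin 3)} (h : 2 ∉ l) : derivWords l = [] := by
  induction l with
  | nil => rfl
  | cons x t ih =>
    rw [List.mem_cons, not_or] at h
    simp [derivWords, Ne.symm h.1, ih h.2]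

lemma derivWords_append_cons_two {p q : List (Fin 3)} (hp : 2 ∉ p) (hq : 2 ∉ q) :
    derivWords (p ++ 2 :: q) = [p ++ 0 :: 1 :: q, p ++ 1 :: 0 :: q] := by
  simp [derivWords_append, derivWords_eq_nil hp, derivWords, derivWords_eq_nil hq]

lemma count_length_of_mem_derivWords {l m : List (Fin 3)} (hm : m ∈ derivWords l) :
    m.count 2 + 1 = l.count 2 ∧ m.length = l.length + 1 := by
  induction l generalizing m with
  | nil => simp [derivWords] at hm
  | cons x t ih =>
    simp only [derivWords, List.mem_append, List.mem_map] at hm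
    rcases hm with hm | ⟨m', hm', rfl⟩
    · by_cases hx : x = 2
      · simp only [hx, if_true, List.mem_cons, List.not_mem_nil, or_false] at hm
        rcases hm with rfl | rfl <;> simp [hx]
      · simp [hx] at hm
    · have := ih hm'
      simp only [List.count_cons, List.length_cons]
      omega

lemma wtp_of_mem_derivWords {l m : List (Fin 3)} (hm : m ∈ derivWords l) : wtp m = wtp l := by
  have := count_length_of_mem_derivWords hm
  simp only [wtp]
  omega

lemma apply_wordFA_eq_sum_derivWords {D : FA →ₗ[ZMod 2] FA}
    (h0 : D (FreeAlgebra.ι (ZMod 2) 0) = 0) (h1 : D (FreeAlgebra.ι (ZMod 2) 1) = 0)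
    (h2 : D (FreeAlgebra.ι (ZMod 2) 2) =
      FreeAlgebra.ι (ZMod 2) 0 * FreeAlgebra.ι (ZMod 2) 1 +
        FreeAlgebra.ι (ZMod 2) 1 * FreeAlgebra.ι (ZMod 2) 0)
    (hL : ∀ x y : FA, D (x * y) = D x * y + x * D y) (l : List (Fin 3)) :
    D (wordFA l) = ((derivWords l).map wordFA).sum := by
  induction l with
  | nil => simpa [wordFA, derivWords] using hL 1 1
  | cons x t ih =>
    have hmul : ∀ L : List (List (Fin 3)), FreeAlgebra.ι (ZMod 2) x * (L.map wordFA).sum =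
        (L.map fun m => wordFA (x :: m)).sum := fun L => by
      simp [← List.sum_map_mul_left, wordFA]
    change D (FreeAlgebra.ι (ZMod 2) x * wordFA t) = _
    rw [hL, ih, hmul]
    fin_cases x <;>
      simp [derivWords, wordFA, h0, h1, h2, add_mul, mul_assoc, add_assoc, Function.comp_def]

def IsDifferential (μ : R0dual →ₗ[ZMod 2] R0dual) : Prop :=
  μ (gen 0) = 0 ∧ μ (gen 1) = 0 ∧ μ (gen 2) = gen 0 * gen 1 + gen 1 * gen 0 ∧
    ∀ a b, μ (a * b) = μ a * b + a * μ b

lemma mu_mono_append_two {μ : R0dual →ₗ[ZMod 2] R0dual} (hμ : IsDifferential μ)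
    {l : List (Fin 3)} (hl : 2 ∉ l) :
    μ (mono (l ++ [2])) = mono (l ++ [0, 1]) + mono (l ++ [1, 0]) := by
  obtain ⟨h0, h1, h2, hL⟩ := hμ
  have hfree : μ (mono l) = 0 := by
    induction l with
    | nil => simpa [mono] using hL 1 1
    | cons x t ih =>
      rw [mono_cons, hL, ih (fun h => hl (.tail x h))]
      fin_cases x <;> simp_all
  rw [mono_append, hL, hfree, zero_mul, zero_add]
  simp [mono, h2, mul_add]

open Classical in
def wordHomotopy (l : List (Fin 3)) : R0dual :=
  if mono l = 0 then 0 else mono (prune l ++ [2])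

lemma wordHomotopy_eq_zero_of_count_pos {l : List (Fin 3)} (h : 0 < l.count 2) :
    wordHomotopy l = 0 := by
  unfold wordHomotopy
  split_ifs
  · rfl
  · exact mono_eq_zero_of_two_le_count
      (by simp only [List.count_append, count_prune, List.count_singleton_self]; omega)

lemma mu_wordHomotopy_of_two_not_mem {μ : R0dual →ₗ[ZMod 2] R0dual} (hμ : IsDifferential μ)
    {l : List (Fin 3)} (hθ : 2 ∉ l) (hlen : 3 ≤ l.length) : μ (wordHomotopy l) = mono l := by
  unfold wordHomotopy
  split_ifs with hz
  · rw [hz, map_zero]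
  have hc : l.IsChain (· ≠ ·) := by
    by_contra hc
    exact hz (mono_eq_zero_of_not_isChain hc)
  obtain ⟨c, d, x, y, rfl⟩ : ∃ c d x y, l = c ++ [d, x, y] := by
    obtain ⟨d, x, y, h⟩ := List.length_eq_three.mp
      (show (l.drop (l.length - 3)).length = 3 by simp only [List.length_drop]; omega)
    exact ⟨l.take (l.length - 3), d, x, y, by rw [← h, List.take_append_drop]⟩
  have hdx : d ≠ x := (List.isChain_append_cons_cons.mp hc).2.1
  have hxy : x ≠ y := (List.isChain_cons_cons.mp (List.isChain_append_cons_cons.mp hc).2.2).1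
  have hprune : prune (c ++ [d, x, y]) = c ++ [d] := by simp [prune_of_two_not_mem hθ]
  have hc2 : 2 ∉ c ++ [d] := fun h => hθ (by simp_all)
  rw [hprune, mu_mono_append_two hμ hc2]
  simp only [List.mem_append, List.mem_cons, List.not_mem_nil, or_false, not_or] at hθ
  obtain ⟨rfl, rfl, rfl⟩ | ⟨rfl, rfl, rfl⟩ : (d = 1 ∧ x = 0 ∧ y = 1) ∨ (d = 0 ∧ x = 1 ∧ y = 0) := by
    omega
  all_goals simp only [List.append_assoc, List.cons_append, List.nil_append,
    mono_append_cons_cons_self, add_zero, zero_add]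

lemma isChain_append_of_isChain_insert {p q : List (Fin 3)} {x y : Fin 3} (hp : 2 ∉ p)
    (hq : 2 ∉ q) (hx : x ≠ 2) (hy : y ≠ 2) (h : (p ++ x :: y :: q).IsChain (· ≠ ·)) :
    (p ++ q).IsChain (· ≠ ·) := by
  obtain ⟨hpx, hxy, hyq⟩ := List.isChain_append_cons_cons.mp h
  obtain ⟨hp', -, hdx⟩ := List.isChain_append.mp hpx
  obtain ⟨hyc, hq'⟩ := List.isChain_cons.mp hyq
  refine List.isChain_append.mpr ⟨hp', hq', fun d hd c hc => ?_⟩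
  have := hdx d hd x rfl
  have := hyc c hc
  have : d ≠ 2 := fun h => hp (h ▸ List.mem_of_mem_getLast? hd)
  have : c ≠ 2 := fun h => hq (h ▸ List.mem_of_mem_head? hc)
  omega

lemma exists_isChain_insert {p q : List (Fin 3)} (hp : 2 ∉ p) (hq : 2 ∉ q)
    (hc : (p ++ q).IsChain (· ≠ ·)) (hne : p ++ q ≠ []) :
    ∃ x y, x ≠ 2 ∧ y ≠ 2 ∧ x ≠ y ∧ (p ++ x :: y :: q).IsChain (· ≠ ·) ∧
      mono (p ++ y :: x :: q) = 0 ∧ (p ++ x :: y :: q).head? = (p ++ q).head? := by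
  obtain rfl | ⟨p', d, rfl⟩ := p.eq_nil_or_concat'
  · obtain _ | ⟨c, q'⟩ := q
    · simp at hne
    obtain ⟨e, he, hec⟩ : ∃ e : Fin 3, e ≠ 2 ∧ e ≠ c :=
      ⟨if c = 0 then 1 else 0, by split_ifs <;> omega⟩
    refine ⟨c, e, fun h => hq (by simp [h]), he, Ne.symm hec, ?_,
      mono_append_cons_cons_self [e] q' c, rfl⟩
    simpa [List.isChain_cons_cons, hec, Ne.symm hec] using hc
  · obtain ⟨e, he, hed⟩ : ∃ e : Fin 3, e ≠ 2 ∧ e ≠ d :=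
      ⟨if d = 0 then 1 else 0, by split_ifs <;> omega⟩
    obtain ⟨hpd, hdq⟩ := List.isChain_split.mp (by simpa using hc)
    refine ⟨e, d, he, fun h => hp (by simp [h]), hed, ?_, ?_, by simp⟩
    · rw [List.append_assoc, List.singleton_append, List.isChain_append_cons_cons,
        List.isChain_cons_cons]
      exact ⟨hpd, Ne.symm hed, hed, hdq⟩
    · simpa using mono_append_cons_cons_self p' (e :: q) d

lemma wordHomotopy_insert_add {p q : List (Fin 3)} (hp : 2 ∉ p) (hq : 2 ∉ q) (hne : p ++ q ≠ []) :
    wordHomotopy (p ++ 0 :: 1 :: q) + wordHomotopy (p ++ 1 :: 0 :: q) = gen 2 * mono (p ++ q) := by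
  by_cases hc : (p ++ q).IsChain (· ≠ ·)
  · obtain ⟨x, y, hx, hy, hxy, hW, hW', hhead⟩ := exists_isChain_insert hp hq hc hne
    have hθ : 2 ∉ p ++ x :: y :: q := by simp [hp, hq, Ne.symm hx, Ne.symm hy]
    have hprune : prune (p ++ x :: y :: q) = p ++ q := by
      have hlen : 0 < p.length + q.length := by simpa using List.length_pos_iff.mpr hne
      rw [prune_of_two_not_mem hθ]
      refine eq_of_isChain_ne_of_head?_eq
        (fun h => hθ (List.dropLast_subset _ (List.dropLast_subset _ h))) (by simp [hp, hq])
        (hW.prefix ((List.dropLast_prefix _).trans (List.dropLast_prefix _))) hc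
        (by simp) ?_
      rw [List.head?_dropLast, List.head?_dropLast, if_pos (by simp; omega),
        if_pos (by simp; omega), hhead]
    have hswap : wordHomotopy (p ++ 0 :: 1 :: q) + wordHomotopy (p ++ 1 :: 0 :: q) =
        wordHomotopy (p ++ x :: y :: q) + wordHomotopy (p ++ y :: x :: q) := by
      obtain ⟨rfl, rfl⟩ | ⟨rfl, rfl⟩ : x = 0 ∧ y = 1 ∨ x = 1 ∧ y = 0 := by omega
      · rfl
      · exact add_comm _ _
    rw [hswap, wordHomotopy, if_neg (mono_ne_zero_of_isChain hθ hW), hprune, wordHomotopy,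
      if_pos hW', add_zero]
    simpa using mono_append_cons_two (p ++ q) []
  · have hzero : ∀ x y : Fin 3, x ≠ 2 → y ≠ 2 → wordHomotopy (p ++ x :: y :: q) = 0 :=
      fun x y hx hy => by
        rw [wordHomotopy, if_pos (mono_eq_zero_of_not_isChain fun hW =>
          hc (isChain_append_of_isChain_insert hp hq hx hy hW))]
    rw [hzero 0 1 (by decide) (by decide), hzero 1 0 (by decide) (by decide),
      mono_eq_zero_of_not_isChain hc, mul_zero, add_zero]

theorem mu_wordHomotopy_add_sum_derivWords {μ : R0dual →ₗ[ZMod 2] R0dual}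
    (hμ : IsDifferential μ) {l : List (Fin 3)} (hl : 3 ≤ wtp l) :
    μ (wordHomotopy l) + ((derivWords l).map wordHomotopy).sum = mono l := by
  obtain h | h | h : l.count 2 = 0 ∨ l.count 2 = 1 ∨ 2 ≤ l.count 2 := by omega
  · have hθ : 2 ∉ l := List.count_eq_zero.mp h
    rw [derivWords_eq_nil hθ, List.map_nil, List.sum_nil, add_zero]
    exact mu_wordHomotopy_of_two_not_mem hμ hθ (by simpa [wtp, h] using hl)
  · obtain ⟨p, q, rfl⟩ := List.append_of_mem (List.count_pos_iff.mp (by omega : 0 < l.count 2))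
    have hpq : p.count 2 = 0 ∧ q.count 2 = 0 := by
      simp only [List.count_append, List.count_cons_self] at h
      omega
    have hne : p ++ q ≠ [] := by
      intro hnil
      obtain ⟨rfl, rfl⟩ := List.append_eq_nil_iff.mp hnil
      simp [wtp] at hl
    rw [wordHomotopy_eq_zero_of_count_pos (by omega), map_zero, zero_add,
      derivWords_append_cons_two (List.count_eq_zero.mp hpq.1) (List.count_eq_zero.mp hpq.2)]
    simp only [List.map_cons, List.map_nil, List.sum_cons, List.sum_nil, add_zero]
    rw [wordHomotopy_insert_add (List.count_eq_zero.mp hpq.1) (List.count_eq_zero.mp hpq.2) hne,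
      mono_append_cons_two]
  · rw [wordHomotopy_eq_zero_of_count_pos (by omega), map_zero, zero_add,
      mono_eq_zero_of_two_le_count h]
    refine List.sum_eq_zero fun u hu => ?_
    obtain ⟨m, hm, rfl⟩ := List.mem_map.mp hu
    have := (count_length_of_mem_derivWords hm).1
    exact wordHomotopy_eq_zero_of_count_pos (by omega)

lemma phi1w_append_add_mul (N : ℕ) (a b : List (Fin 3)) :
    phi1w N (a ++ b) + phi1w N a * phi1w N b =
      if N < wtp a + wtp b ∧ wtp a ≤ N ∧ wtp b ≤ N then mono (a ++ b) else 0 := by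
  unfold phi1w
  rw [wtp_append, mono_append]
  split_ifs <;> first | omega | simp [ZModModule.add_self]

lemma phi2w_eq (N : ℕ) (a b : List (Fin 3)) :
    phi2w N a b =
      if N < wtp a + wtp b ∧ wtp a ≤ N ∧ wtp b ≤ N then wordHomotopy (a ++ b) else 0 := by
  unfold phi2w wordHomotopy
  rw [wtp_append]
  split_ifs <;> simp_all

lemma sum_phi2w_derivWords (N : ℕ) (a b : List (Fin 3)) :
    ((derivWords a).map fun m => phi2w N m b).sum + ((derivWords b).map fun m => phi2w N a m).sum =
      if N < wtp a + wtp b ∧ wtp a ≤ N ∧ wtp b ≤ N then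
        ((derivWords (a ++ b)).map wordHomotopy).sum
      else 0 := by
  have hleft : (derivWords a).map (fun m => phi2w N m b) = (derivWords a).map fun m =>
      if N < wtp a + wtp b ∧ wtp a ≤ N ∧ wtp b ≤ N then wordHomotopy (m ++ b) else 0 :=
    List.map_congr_left fun m hm => by rw [phi2w_eq, wtp_of_mem_derivWords hm]
  have hright : (derivWords b).map (fun m => phi2w N a m) = (derivWords b).map fun m =>
      if N < wtp a + wtp b ∧ wtp a ≤ N ∧ wtp b ≤ N then wordHomotopy (a ++ m) else 0 :=
    List.map_congr_left fun m hm => by rw [phi2w_eq, wtp_of_mem_derivWords hm]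
  rw [hleft, hright, derivWords_append, List.map_append, List.sum_append, List.map_map,
    List.map_map]
  split_ifs <;> simp [Function.comp_def]

/-- The pair `(φ₁, φ₂, 0, 0, …)` satisfies the two-input `A∞`-morphism relation:
for all monomials `a, b` of `R₀^!`,
`φ₁(ab) + φ₁(a)φ₁(b) + μ₁(φ₂(a,b)) + φ₂(μ₁(a), b) + φ₂(a, μ₁(b)) = 0`,
where `μ₁` is the differential (with `μ₁(θ) = wz + zw`, extended by the Leibniz
rule) and `φ₂` is extended bilinearly (via linear maps `P·, Q·` extending `φ₂` in
its first, resp. second, argument over the word basis of the free algebra, applied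
to the lift `D` of `μ₁`). -/
theorem stmt_19 (N : ℕ) (hN : 4 ≤ N)
    (μ₁ : R0dual →ₗ[ZMod 2] R0dual)
    (hμ₁ : μ₁ (gen 0) = 0 ∧ μ₁ (gen 1) = 0 ∧
      μ₁ (gen 2) = gen 0 * gen 1 + gen 1 * gen 0 ∧
      ∀ a b, μ₁ (a * b) = μ₁ a * b + a * μ₁ b)
    (D : FA →ₗ[ZMod 2] FA)
    (hD : D (FreeAlgebra.ι (ZMod 2) 0) = 0 ∧ D (FreeAlgebra.ι (ZMod 2) 1) = 0 ∧
      D (FreeAlgebra.ι (ZMod 2) 2) =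
        FreeAlgebra.ι (ZMod 2) 0 * FreeAlgebra.ι (ZMod 2) 1 +
          FreeAlgebra.ι (ZMod 2) 1 * FreeAlgebra.ι (ZMod 2) 0 ∧
      ∀ x y : FA, D (x * y) = D x * y + x * D y)
    (P Q : List (Fin 3) → FA →ₗ[ZMod 2] R0dual)
    (hP : ∀ (b l : List (Fin 3)), P b (wordFA l) = phi2w N l b)
    (hQ : ∀ (a l : List (Fin 3)), Q a (wordFA l) = phi2w N a l) :
    ∀ a b : List (Fin 3),
      phi1w N (a ++ b) + phi1w N a * phi1w N b + μ₁ (phi2w N a b) +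
        P b (D (wordFA a)) + Q a (D (wordFA b)) = 0 := by
  obtain ⟨hD0, hD1, hD2, hDL⟩ := hD
  intro a b
  have hPQ : P b (D (wordFA a)) + Q a (D (wordFA b)) =
      ((derivWords a).map fun m => phi2w N m b).sum +
        ((derivWords b).map fun m => phi2w N a m).sum := by
    simp only [apply_wordFA_eq_sum_derivWords hD0 hD1 hD2 hDL, map_list_sum,
      List.map_map, Function.comp_def, hP, hQ]
  rw [add_assoc _ (P b _), hPQ, sum_phi2w_derivWords, phi1w_append_add_mul, phi2w_eq]
  split_ifs with hc
  · have hwtp : 3 ≤ wtp (a ++ b) := by rw [wtp_append]; omega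
    rw [add_assoc, mu_wordHomotopy_add_sum_derivWords hμ₁ hwtp, ZModModule.add_self]
  · simp

end
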